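/- Main theorem (conditional form): Let p be prime, n odd with n ∣ p - 1, and H the subgroup of n-th roots of unity in (ℤ/pℤ)* (order n). Suppose for some δ ∈ (0, 1/6) and constant C that max_{a∈(ℤ/pℤ)*} |∑_{h∈H} e(ah/p)| ≤ C·n/p^{3δ}, and that p is sufficiently large in terms of δ and C. Then for every nonzero n-th power residue m mod p there exists an integer x with 1 ≤ |x| ≤ p^{1-δ} and x^n ≡ m (mod p); consequently k(p,n) ≤ p^{1-δ}. -/

import Mathlib

open scoped Classical

/-- `e(t) = exp(2πit)`. -/
noncomputable def e (t : ℝ) : ℂ := Complex.exp (2 * Real.pi * Complex.I * t)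

/-- The set of `n`-th powers of `±1, ..., ±k` covers all nonzero `n`-th power
residues modulo `p`. -/
def covers (p n k : ℕ) : Prop :=
  {a : ZMod p | ∃ x : ℤ, 1 ≤ |x| ∧ |x| ≤ (k : ℤ) ∧ ((x : ZMod p)) ^ n = a} =
    {a : ZMod p | a ≠ 0 ∧ ∃ y : ZMod p, y ^ n = a}

/-- `k(p, n)`: the least positive `k` such that the `n`-th powers of
`±1, ..., ±k` yield all nonzero `n`-th power residues modulo `p`. -/
noncomputable def kpn (p n : ℕ) : ℕ :=
  sInf {k : ℕ | 0 < k ∧ covers p n k}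

open Finset Filter
open scoped Real

lemma e_add (s t : ℝ) : e (s + t) = e s * e t := by
  simp [e, mul_add, Complex.exp_add]

lemma e_zero : e 0 = 1 := by simp [e]

lemma e_int (m : ℤ) : e m = 1 := by
  simp only [e]
  rw [show 2 * (Real.pi:ℂ) * Complex.I * (m:ℝ) = (m:ℤ) * (2 * Real.pi * Complex.I) by push_cast; ring]
  exact Complex.exp_int_mul_two_pi_mul_I m

lemma e_abs (t : ℝ) : ‖e t‖ = 1 := by
  rw [e, Complex.norm_exp]
  have : (2 * (Real.pi:ℂ) * Complex.I * (t:ℝ)).re = 0 := by simp [Complex.mul_re]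
  simp [this]

lemma e_nat_pow (k : ℕ) (t : ℝ) : e (k * t) = e t ^ k := by
  simp only [e, ← Complex.exp_nat_mul]
  congr 1
  push_cast
  ring

lemma e_eq_one_iff (t : ℝ) : e t = 1 ↔ ∃ m : ℤ, t = m := by
  rw [e, Complex.exp_eq_one_iff]
  constructor
  · rintro ⟨m, hm⟩
    refine ⟨m, ?_⟩
    have h2 : (2 * (Real.pi:ℂ) * Complex.I) ≠ 0 := by
      simp [Real.pi_ne_zero, Complex.I_ne_zero]
    have hm' : (t : ℂ) * (2 * Real.pi * Complex.I) = (m:ℂ) * (2 * Real.pi * Complex.I) := by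
      rw [← hm]; ring
    have : (t:ℂ) = m := mul_right_cancel₀ h2 hm'
    exact_mod_cast this
  · rintro ⟨m, rfl⟩
    exact ⟨m, by push_cast; ring⟩


lemma e_int_div_eq_one_iff (p : ℕ) (hp : 0 < p) (c : ℤ) :
    e ((c : ℝ) / p) = 1 ↔ (p:ℤ) ∣ c := by
  rw [e_eq_one_iff]
  constructor
  · rintro ⟨m, hm⟩
    have : (c:ℝ) = m * p := by
      field_simp at hm; linarith [hm]
    have : c = m * p := by exact_mod_cast this
    exact ⟨m, by linarith⟩
  · rintro ⟨m, rfl⟩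
    refine ⟨m, ?_⟩
    field_simp
    norm_cast

lemma e_congr (p : ℕ) (hp : 0 < p) {z : ℤ} {w : ZMod p} (h : (z : ZMod p) = w) :
    e ((z : ℝ) / p) = e ((w.val : ℝ) / p) := by
  haveI : NeZero p := ⟨hp.ne'⟩
  have hd : (p:ℤ) ∣ z - (w.val : ℤ) := by
    rw [← ZMod.intCast_zmod_eq_zero_iff_dvd]
    push_cast
    rw [h, sub_eq_zero]
    exact (ZMod.natCast_rightInverse w).symm
  obtain ⟨m, hm⟩ := hd
  have : (z : ℝ) / p = (w.val : ℝ) / p + m := by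
    have : (z : ℝ) = (w.val : ℝ) + m * p := by
      have := congrArg (fun x : ℤ => (x : ℝ)) hm
      push_cast at this ⊢
      linarith
    field_simp [this]
    linarith
  rw [this, e_add, e_int, mul_one]

lemma orth (p : ℕ) (hp : 0 < p) (c : ℤ) :
    ∑ t ∈ Finset.range p, e (((t : ℤ) * c : ℤ) / p) =
      if (c : ZMod p) = 0 then (p : ℂ) else 0 := by
  have key : ∀ t : ℕ, e (((t : ℤ) * c : ℤ) / p) = e ((c:ℝ)/p) ^ t := by
    intro t
    rw [← e_nat_pow]
    congr 1
    push_cast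
    ring
  simp only [key]
  by_cases h : (c : ZMod p) = 0
  · have h1 : e ((c:ℝ)/p) = 1 := by
      rw [e_int_div_eq_one_iff p hp]
      exact (ZMod.intCast_zmod_eq_zero_iff_dvd c p).mp h
    simp [h1, h]
  · have h1 : e ((c:ℝ)/p) ≠ 1 := by
      rw [Ne, e_int_div_eq_one_iff p hp]
      intro hd
      exact h ((ZMod.intCast_zmod_eq_zero_iff_dvd c p).mpr hd)
    rw [if_neg h, geom_sum_eq h1]
    have : e ((c:ℝ)/p) ^ p = 1 := by
      rw [← e_nat_pow, e_eq_one_iff]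
      exact ⟨c, by field_simp⟩
    simp [this]


lemma abs_e_sub_one {x : ℝ} (h0 : 0 ≤ x) (h1 : x ≤ 1) :
    ‖e x - 1‖ = 2 * Real.sin (π * x) := by
  have hx : e x = Complex.exp ((2 * π * x : ℝ) * Complex.I) := by
    rw [e]; congr 1; push_cast; ring
  rw [hx, Complex.exp_mul_I, ← Complex.ofReal_cos, ← Complex.ofReal_sin]
  have h5 : ((Real.cos (2*π*x) : ℝ) : ℂ) + ((Real.sin (2*π*x) : ℝ) : ℂ) * Complex.I - 1
      = ((Real.cos (2*π*x) - 1 : ℝ) : ℂ) + ((Real.sin (2*π*x) : ℝ) : ℂ) * Complex.I := by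
    push_cast; ring
  rw [h5, Complex.norm_add_mul_I]
  have hsin : Real.sin (π*x) ≥ 0 :=
    Real.sin_nonneg_of_nonneg_of_le_pi (by positivity)
      (by nlinarith [Real.pi_pos])
  have hsq : (Real.cos (2*π*x) - 1)^2 + Real.sin (2*π*x)^2 = (2 * Real.sin (π*x))^2 := by
    have h2 : Real.cos (2*(π*x)) = 1 - 2 * Real.sin (π*x)^2 := by
      rw [Real.cos_two_mul, Real.cos_sq']
      ring
    have h3 := Real.sin_sq_add_cos_sq (2*(π*x))
    have h4 : (2:ℝ)*π*x = 2*(π*x) := by ring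
    rw [h4]
    nlinarith [h2, h3]
  rw [hsq, Real.sqrt_sq (by positivity)]

lemma sin_pos_frac (p t : ℕ) (hp : 0 < p) (ht1 : 1 ≤ t) (ht2 : t < p) :
    0 < Real.sin (π * t / p) := by
  apply Real.sin_pos_of_pos_of_lt_pi
  · have : (0:ℝ) < t := by exact_mod_cast ht1
    have hp' : (0:ℝ) < p := by exact_mod_cast hp
    positivity
  · have hp' : (0:ℝ) < p := by exact_mod_cast hp
    have htp : (t:ℝ) < p := by exact_mod_cast ht2
    have h1 : π * t / p = π * ((t:ℝ)/p) := by ring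
    rw [h1]
    have h2 : (t:ℝ)/p < 1 := by rw [div_lt_one hp']; exact htp
    nlinarith [Real.pi_pos, div_nonneg (Nat.cast_nonneg t) hp'.le]

lemma geom_bound (p K t : ℕ) (hp : 0 < p) (ht1 : 1 ≤ t) (ht2 : t < p) :
    ‖∑ j ∈ range K, e (((t * (j+1) : ℕ) : ℝ) / p)‖ ≤
      1 / Real.sin (π * t / p) := by
  set ζ := e ((t:ℝ)/p) with hζdef
  have hterm : ∀ j : ℕ, e (((t * (j+1) : ℕ) : ℝ) / p) = ζ ^ (j+1) := by
    intro j
    rw [hζdef, ← e_nat_pow]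
    congr 1
    push_cast
    ring
  have hζ1 : ζ ≠ 1 := by
    rw [hζdef]
    have : ((t:ℝ)/p) = (((t:ℤ)):ℝ)/p := by push_cast; ring
    rw [this, Ne, e_int_div_eq_one_iff p hp]
    intro hd
    have := Int.le_of_dvd (by exact_mod_cast ht1) hd
    omega
  have habsζ : ‖ζ‖ = 1 := e_abs _
  have hsum : ∑ j ∈ range K, e (((t * (j+1) : ℕ) : ℝ) / p) = ζ * ((ζ^K - 1)/(ζ - 1)) := by
    rw [← geom_sum_eq hζ1]
    rw [Finset.mul_sum]
    refine Finset.sum_congr rfl fun j _ => ?_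
    rw [hterm j, pow_succ]
    ring
  have hsin : 0 < Real.sin (π * t / p) := sin_pos_frac p t hp ht1 ht2
  have habs : ‖e ((t:ℝ)/p) - 1‖ = 2 * Real.sin (π * (t/p)) := by
    apply abs_e_sub_one
    · positivity
    · rw [div_le_one (by exact_mod_cast hp)]
      exact_mod_cast ht2.le
  rw [hsum]
  rw [norm_mul, habsζ, one_mul, norm_div]
  have h1 : ‖ζ^K - 1‖ ≤ 2 := by
    calc ‖ζ^K - 1‖ ≤ ‖ζ^K‖ + 1 := by
          simpa using norm_sub_le (ζ^K) 1
      _ ≤ 2 := by rw [norm_pow, habsζ, one_pow]; norm_num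
  have h2 : ‖ζ - 1‖ = 2 * Real.sin (π * t / p) := by
    rw [hζdef, habs]; ring_nf
  rw [h2]
  rw [div_le_div_iff₀ (by positivity) (by positivity)]
  calc ‖ζ^K - 1‖ * Real.sin (π * t / p) ≤ 2 * Real.sin (π * t / p) := by
        apply mul_le_mul_of_nonneg_right h1 hsin.le
    _ = 1 * (2 * Real.sin (π * t / p)) := by ring


lemma sin_inv_bound (p t : ℕ) (hp : 0 < p) (ht1 : 1 ≤ t) (ht2 : t < p) :
    1 / Real.sin (π * t / p) ≤ (p:ℝ)/2 * (1/t + 1/(p-t:ℕ)) := by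
  have hp' : (0:ℝ) < p := by exact_mod_cast hp
  have ht' : (0:ℝ) < t := by exact_mod_cast ht1
  have hpt : 0 < p - t := by omega
  have hpt' : (0:ℝ) < (p-t:ℕ) := by exact_mod_cast hpt
  have key : ∀ s : ℕ, 1 ≤ s → 2*s ≤ p → s < p → (2*s:ℝ)/p ≤ Real.sin (π * s / p) := by
    intro s hs1 hs2 hsp
    have hs' : (0:ℝ) < s := by exact_mod_cast hs1
    have h2s : (2*(s:ℝ)) ≤ p := by exact_mod_cast hs2
    have harg1 : (0:ℝ) ≤ π * s / p := by positivity
    have harg2 : π * s / p ≤ π/2 := by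
      rw [div_le_div_iff₀ hp' two_pos]
      nlinarith [Real.pi_pos]
    have := Real.mul_le_sin harg1 harg2
    calc (2*s:ℝ)/p = 2/π * (π * s / p) := by
          field_simp
      _ ≤ Real.sin (π * s / p) := this
  have hsym : Real.sin (π * t / p) = Real.sin (π * (p-t:ℕ) / p) := by
    have : π * (p-t:ℕ) / p = π - π * t / p := by
      have : ((p-t:ℕ):ℝ) = (p:ℝ) - t := by
        push_cast [Nat.cast_sub ht2.le]; ring
      rw [this]
      field_simp
    rw [this, Real.sin_pi_sub]
  by_cases hc : 2*t ≤ p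
  · have hb := key t ht1 hc ht2
    have hpos : (0:ℝ) < (2*t:ℝ)/p := by positivity
    have h1 : 1 / Real.sin (π * t / p) ≤ 1 / ((2*t:ℝ)/p) :=
      one_div_le_one_div_of_le hpos hb
    calc 1 / Real.sin (π * t / p) ≤ 1 / ((2*t:ℝ)/p) := h1
      _ = (p:ℝ)/2 * (1/t) := by field_simp
      _ ≤ (p:ℝ)/2 * (1/t + 1/(p-t:ℕ)) := by
          have : (0:ℝ) ≤ 1/(p-t:ℕ) := by positivity
          nlinarith
  · push_neg at hc
    have hb := key (p-t) (by omega) (by omega) (by omega)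
    rw [hsym]
    have hpos : (0:ℝ) < (2*(p-t:ℕ):ℝ)/p := by positivity
    have h1 : 1 / Real.sin (π * (p-t:ℕ) / p) ≤ 1 / ((2*(p-t:ℕ):ℝ)/p) :=
      one_div_le_one_div_of_le hpos (by exact_mod_cast hb)
    calc 1 / Real.sin (π * (p-t:ℕ) / p) ≤ 1 / ((2*(p-t:ℕ):ℝ)/p) := h1
      _ = (p:ℝ)/2 * (1/(p-t:ℕ)) := by field_simp
      _ ≤ (p:ℝ)/2 * (1/t + 1/(p-t:ℕ)) := by
          have : (0:ℝ) ≤ 1/(t:ℝ) := by positivity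
          nlinarith

lemma harmonic_sum_Ico (p : ℕ) (hp : 1 ≤ p) :
    ∑ t ∈ Ico 1 p, (1:ℝ)/t = (harmonic (p-1) : ℝ) := by
  rw [Finset.sum_Ico_eq_sum_range]
  rw [harmonic, Rat.cast_sum]
  refine Finset.sum_congr rfl fun i _ => ?_
  push_cast
  ring

lemma reflect_sum (p : ℕ) (hp : 1 ≤ p) :
    ∑ t ∈ Ico 1 p, (1:ℝ)/(p-t:ℕ) = ∑ t ∈ Ico 1 p, (1:ℝ)/t := by
  apply Finset.sum_nbij' (fun t => p - t) (fun t => p - t)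
  · intro a ha; simp only [Finset.mem_Ico] at *; omega
  · intro a ha; simp only [Finset.mem_Ico] at *; omega
  · intro a ha; simp only [Finset.mem_Ico] at ha; omega
  · intro a ha; simp only [Finset.mem_Ico] at ha; omega
  · intro a ha; simp only [Finset.mem_Ico] at ha
    congr 1

lemma sin_sum_bound (p : ℕ) (hp : 2 ≤ p) :
    ∑ t ∈ Ico 1 p, 1 / Real.sin (π * t / p) ≤ (p:ℝ) * (1 + Real.log p) := by
  have h1 : ∑ t ∈ Ico 1 p, 1 / Real.sin (π * t / p)
      ≤ ∑ t ∈ Ico 1 p, (p:ℝ)/2 * (1/t + 1/(p-t:ℕ)) := by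
    apply Finset.sum_le_sum
    intro t ht
    simp only [Finset.mem_Ico] at ht
    exact sin_inv_bound p t (by omega) ht.1 ht.2
  have h2 : ∑ t ∈ Ico 1 p, (p:ℝ)/2 * (1/t + 1/(p-t:ℕ))
      = (p:ℝ) * (harmonic (p-1) : ℝ) := by
    rw [← Finset.mul_sum, Finset.sum_add_distrib, reflect_sum p (by omega),
      harmonic_sum_Ico p (by omega)]
    ring
  have h3 : (harmonic (p-1) : ℝ) ≤ 1 + Real.log (p-1:ℕ) := harmonic_le_one_add_log _
  have h4 : Real.log ((p-1:ℕ):ℝ) ≤ Real.log p := by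
    apply Real.log_le_log
    · exact_mod_cast (by omega : 0 < p - 1)
    · exact_mod_cast (by omega : p - 1 ≤ p)
  have hh : (harmonic (p-1) : ℝ) ≤ 1 + Real.log p := by linarith
  have hp' : (0:ℝ) < p := by exact_mod_cast (by omega : 0 < p)
  calc ∑ t ∈ Ico 1 p, 1 / Real.sin (π * t / p)
      ≤ (p:ℝ) * (harmonic (p-1) : ℝ) := by rw [← h2]; exact h1
    _ ≤ (p:ℝ) * (1 + Real.log p) := by nlinarith


lemma exists_prim (p n : ℕ) [hp : Fact p.Prime] (hn : 0 < n) (hd : n ∣ p - 1) :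
    ∃ ζ : ZMod p, IsPrimitiveRoot ζ n := by
  obtain ⟨g, hg⟩ := IsCyclic.exists_generator (α := (ZMod p)ˣ)
  have hog : orderOf g = p - 1 := by
    have h1 : orderOf g = Nat.card (ZMod p)ˣ := orderOf_eq_card_of_forall_mem_zpowers hg
    rw [h1, Nat.card_eq_fintype_card, ZMod.card_units]
  have hp1 : 0 < p - 1 := by
    have := hp.out.two_le; omega
  obtain ⟨d, hd'⟩ := hd
  have hdne : d ≠ 0 := by rintro rfl; omega
  have hddvd : d ∣ orderOf g := by rw [hog, hd']; exact ⟨n, by ring⟩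
  have hou : orderOf (g ^ d) = n := by
    rw [orderOf_pow_of_dvd hdne hddvd, hog, hd', Nat.mul_div_cancel]
    omega
  refine ⟨((g ^ d : (ZMod p)ˣ) : ZMod p), ?_⟩
  have : orderOf (((g ^ d : (ZMod p)ˣ) : ZMod p)) = n := by
    rw [orderOf_units, hou]
  exact this ▸ IsPrimitiveRoot.orderOf _
lemma card_coset (p n : ℕ) [hp : Fact p.Prime] (hn : 0 < n) (hd : n ∣ p - 1)
    (m : ZMod p) (hm : m ≠ 0) (hex : ∃ y : ZMod p, y ^ n = m) :
    (univ.filter fun y : ZMod p => y ^ n = m).card = n := by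
  obtain ⟨ζ, hζ⟩ := exists_prim p n hn hd
  have hcard := hζ.card_nthRoots m
  rw [if_pos hex] at hcard
  have hnodup := hζ.nthRoots_nodup hm
  have hset : univ.filter (fun y : ZMod p => y ^ n = m) = (Polynomial.nthRoots n m).toFinset := by
    ext y
    simp [Polynomial.mem_nthRoots hn]
  rw [hset, Multiset.toFinset_card_of_nodup hnodup, hcard]

lemma coset_image (p n : ℕ) [hp : Fact p.Prime] (hn : 0 < n) (m : ZMod p) (hm : m ≠ 0)
    (u₀ : (ZMod p)ˣ) (h0 : ((u₀ : ZMod p)) ^ n = m) :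
    univ.filter (fun y : ZMod p => y ^ n = m) =
      (univ.filter fun h : (ZMod p)ˣ => h ^ n = 1).image
        (fun h : (ZMod p)ˣ => ((u₀ * h : (ZMod p)ˣ) : ZMod p)) := by
  ext y
  simp only [Finset.mem_filter, Finset.mem_image, Finset.mem_univ, true_and]
  constructor
  · intro hy
    have hy0 : y ≠ 0 := by
      rintro rfl
      rw [zero_pow hn.ne'] at hy
      exact hm hy.symm
    obtain ⟨v, hv⟩ := isUnit_iff_ne_zero.mpr hy0
    have hvn : v ^ n = u₀ ^ n := by
      apply Units.ext
      rw [Units.val_pow_eq_pow_val, Units.val_pow_eq_pow_val, hv, hy, h0]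
    refine ⟨u₀⁻¹ * v, ?_, ?_⟩
    · rw [mul_pow, hvn, ← mul_pow, inv_mul_cancel, one_pow]
    · rw [← hv]
      congr 1
      rw [← mul_assoc, mul_inv_cancel, one_mul]
  · rintro ⟨h, hh, rfl⟩
    push_cast
    rw [mul_pow, h0]
    have : ((h : ZMod p)) ^ n = 1 := by
      rw [← Units.val_pow_eq_pow_val, hh, Units.val_one]
    rw [this, mul_one]


lemma main_count (p n K : ℕ) [hpp : Fact p.Prime] (hp3 : 3 ≤ p) (hn : 0 < n) (hd : n ∣ p - 1)
    (m : ZMod p) (hm : m ≠ 0) (hex : ∃ y : ZMod p, y ^ n = m) (B : ℝ)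
    (hB : ∀ a : (ZMod p)ˣ,
      ‖∑ h ∈ Finset.univ.filter (fun h : (ZMod p)ˣ => h ^ n = 1),
          e ((((a * h : (ZMod p)ˣ) : ZMod p).val : ℝ) / p)‖ ≤ B)
    (hKB : B * ((p:ℝ) * (1 + Real.log p)) < (K:ℝ) * n) :
    ∃ j : ℕ, j < K ∧ (((j+1 : ℕ) : ZMod p)) ^ n = m := by
  have hp : 0 < p := by omega
  set Hu := Finset.univ.filter (fun h : (ZMod p)ˣ => h ^ n = 1) with hHu
  set coset := Finset.univ.filter (fun y : ZMod p => y ^ n = m) with hcoset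
  obtain ⟨y₀, hy₀⟩ := hex
  have hy₀0 : y₀ ≠ 0 := by
    rintro rfl
    rw [zero_pow hn.ne'] at hy₀
    exact hm hy₀.symm
  obtain ⟨u₀, hu₀⟩ := isUnit_iff_ne_zero.mpr hy₀0
  have hu₀n : ((u₀ : ZMod p)) ^ n = m := by rw [hu₀]; exact hy₀
  -- the count
  set Tf := (range K).filter (fun j => (((j+1:ℕ) : ZMod p)) ^ n = m) with hTf
  -- sums
  set D : ℕ → ℂ := fun t => ∑ j ∈ range K, e (((t * (j+1) : ℕ) : ℝ) / p) with hD
  set S : ℕ → ℂ := fun t => ∑ y ∈ coset, e (((-(t * y.val : ℕ) : ℤ) : ℝ) / p) with hS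
  -- main identity
  have key : ∑ t ∈ range p, D t * S t = (p : ℂ) * (Tf.card : ℂ) := by
    have hsplit : ∀ t, D t * S t = ∑ j ∈ range K, ∑ y ∈ coset,
        e (((t * (j+1) : ℕ) : ℝ) / p) * e (((-(t * y.val : ℕ) : ℤ) : ℝ) / p) := by
      intro t
      rw [hD, hS]
      rw [Finset.sum_mul_sum]
    calc ∑ t ∈ range p, D t * S t
        = ∑ t ∈ range p, ∑ j ∈ range K, ∑ y ∈ coset,
            e (((t * (j+1) : ℕ) : ℝ) / p) * e (((-(t * y.val : ℕ) : ℤ) : ℝ) / p) := by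
          exact Finset.sum_congr rfl fun t _ => hsplit t
      _ = ∑ j ∈ range K, ∑ y ∈ coset, ∑ t ∈ range p,
            e (((t * (j+1) : ℕ) : ℝ) / p) * e (((-(t * y.val : ℕ) : ℤ) : ℝ) / p) := by
          rw [Finset.sum_comm]
          exact Finset.sum_congr rfl fun j _ => Finset.sum_comm
      _ = ∑ j ∈ range K, ∑ y ∈ coset,
            (if (((j+1:ℕ) : ZMod p)) = y then (p:ℂ) else 0) := by
          refine Finset.sum_congr rfl fun j _ => Finset.sum_congr rfl fun y hy => ?_
          have hterm : ∀ t : ℕ, e (((t * (j+1) : ℕ) : ℝ) / p) * e (((-(t * y.val : ℕ) : ℤ) : ℝ) / p)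
              = e ((((t : ℤ) * ((j+1 : ℤ) - (y.val : ℤ)) : ℤ) : ℝ) / p) := by
            intro t
            rw [← e_add]
            congr 1
            push_cast
            ring
          rw [Finset.sum_congr rfl fun t _ => hterm t, orth p hp ((j+1 : ℤ) - (y.val : ℤ))]
          congr 1
          have hcast : (((j+1 : ℤ) - (y.val : ℤ) : ℤ) : ZMod p) = (((j+1:ℕ) : ZMod p)) - y := by
            push_cast [ZMod.natCast_val, ZMod.cast_id]
            norm_num
          rw [eq_iff_iff]
          rw [hcast, sub_eq_zero]
      _ = ∑ j ∈ range K, (if (((j+1:ℕ) : ZMod p)) ∈ coset then (p:ℂ) else 0) := by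
          refine Finset.sum_congr rfl fun j _ => ?_
          rw [Finset.sum_ite_eq coset (((j+1:ℕ) : ZMod p)) (fun _ => (p:ℂ))]
      _ = ∑ j ∈ range K, (if (((j+1:ℕ) : ZMod p)) ^ n = m then (p:ℂ) else 0) := by
          refine Finset.sum_congr rfl fun j _ => ?_
          congr 1
          rw [eq_iff_iff, hcoset]
          simp
      _ = (p : ℂ) * (Tf.card : ℂ) := by
          rw [hTf, ← Finset.sum_filter]
          rw [Finset.sum_const]
          simp [mul_comm]
  -- split off t = 0
  have hins : range p = insert 0 (Ico 1 p) := by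
    ext t; simp [Finset.mem_Ico]; omega
  have hD0 : D 0 = (K : ℂ) := by
    rw [hD]
    simp only []
    have : ∀ j ∈ range K, e (((0 * (j+1) : ℕ) : ℝ) / p) = 1 := by
      intro j _
      norm_num [e_zero]
    rw [Finset.sum_congr rfl this]
    simp
  have hS0 : S 0 = (n : ℂ) := by
    rw [hS]
    simp only []
    have : ∀ y ∈ coset, e (((-(0 * y.val : ℕ) : ℤ) : ℝ) / p) = 1 := by
      intro y _
      norm_num [e_zero]
    rw [Finset.sum_congr rfl this]
    rw [Finset.sum_const]
    rw [hcoset]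
    rw [card_coset p n hn hd m hm ⟨y₀, hy₀⟩]
    simp
  have hsplit0 : ∑ t ∈ range p, D t * S t
      = (K : ℂ) * n + ∑ t ∈ Ico 1 p, D t * S t := by
    rw [hins, Finset.sum_insert (by simp), hD0, hS0]
  -- bound on S t for t ∈ Ico 1 p
  have hSbound : ∀ t ∈ Ico 1 p, ‖S t‖ ≤ B := by
    intro t ht
    rw [Finset.mem_Ico] at ht
    have htz : ((-(t : ℤ) : ℤ) : ZMod p) ≠ 0 := by
      rw [Ne, ZMod.intCast_zmod_eq_zero_iff_dvd]
      intro hdvd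
      rw [dvd_neg] at hdvd
      have := Int.le_of_dvd (by exact_mod_cast ht.1) hdvd
      omega
    have : (((-(t:ℤ)) : ZMod p)) ≠ 0 := by exact_mod_cast htz
    obtain ⟨w, hw⟩ := isUnit_iff_ne_zero.mpr this
    set a : (ZMod p)ˣ := w * u₀ with ha
    have hval : S t = ∑ h ∈ Hu, e ((((a * h : (ZMod p)ˣ) : ZMod p).val : ℝ) / p) := by
      rw [hS]
      simp only []
      rw [hcoset, coset_image p n hn m hm u₀ hu₀n, ← hHu]
      rw [Finset.sum_image ?inj]
      case inj =>
        intro h1 _ h2 _ hEq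
        have : (u₀ * h1 : (ZMod p)ˣ) = (u₀ * h2 : (ZMod p)ˣ) := Units.ext hEq
        exact mul_left_cancel this
      refine Finset.sum_congr rfl fun h _ => ?_
      apply e_congr p hp
      haveI : NeZero p := ⟨hp.ne'⟩
      set w0 : ZMod p := ((u₀ * h : (ZMod p)ˣ) : ZMod p) with hw0
      have h1 : ((w0.val : ℕ) : ZMod p) = w0 := ZMod.natCast_rightInverse w0
      have h2 : ((a * h : (ZMod p)ˣ) : ZMod p) = ((w : ZMod p)) * w0 := by
        rw [ha, hw0]; push_cast; ring
      rw [h2, hw]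
      push_cast [h1]
      ring
    rw [hval]
    exact hB a
  have hB0 : 0 ≤ B := le_trans (norm_nonneg _) (hB 1)
  -- bound on the error
  have hErr : ‖∑ t ∈ Ico 1 p, D t * S t‖ ≤ B * ((p:ℝ) * (1 + Real.log p)) := by
    calc ‖∑ t ∈ Ico 1 p, D t * S t‖
        ≤ ∑ t ∈ Ico 1 p, ‖D t * S t‖ := by
          exact norm_sum_le _ _
      _ ≤ ∑ t ∈ Ico 1 p, (1 / Real.sin (π * t / p)) * B := by
          apply Finset.sum_le_sum
          intro t ht
          rw [Finset.mem_Ico] at ht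
          rw [norm_mul]
          apply mul_le_mul (geom_bound p K t hp ht.1 ht.2) (hSbound t (by simp [Finset.mem_Ico]; omega))
            (norm_nonneg _)
          have hsin := sin_pos_frac p t hp ht.1 ht.2
          exact one_div_nonneg.mpr hsin.le
      _ = (∑ t ∈ Ico 1 p, 1 / Real.sin (π * t / p)) * B := by rw [Finset.sum_mul]
      _ ≤ ((p:ℝ) * (1 + Real.log p)) * B := by
          apply mul_le_mul_of_nonneg_right (sin_sum_bound p (by omega)) hB0
      _ = B * ((p:ℝ) * (1 + Real.log p)) := by ring
  -- conclude
  have hTfne : Tf.card ≠ 0 := by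
    intro h0
    have : ∑ t ∈ range p, D t * S t = (K : ℂ) * n + ∑ t ∈ Ico 1 p, D t * S t := hsplit0
    rw [key, h0] at this
    simp only [Nat.cast_zero, mul_zero] at this
    have hR : ∑ t ∈ Ico 1 p, D t * S t = -((K:ℂ) * n) := by linear_combination -this
    rw [hR] at hErr
    rw [norm_neg] at hErr
    have : ‖(K:ℂ) * n‖ = (K:ℝ) * n := by
      rw [norm_mul, Complex.norm_natCast, Complex.norm_natCast]
    rw [this] at hErr
    linarith
  obtain ⟨j, hj⟩ := Finset.card_ne_zero.mp hTfne |>.exists_mem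
  rw [hTf, Finset.mem_filter, Finset.mem_range] at hj
  exact ⟨j, hj.1, hj.2⟩

lemma eventually_cond (δ C : ℝ) (hδ : 0 < δ) (hδ' : δ < 1 / 6) :
    ∀ᶠ x : ℝ in atTop, 3 ≤ x ∧ 2 ≤ x ^ (1 - δ) ∧
      C * x ^ (1 - 3*δ) * (1 + Real.log x) < x ^ (1 - δ) / 2 := by
  have h1 := (isLittleO_log_rpow_atTop hδ).def one_pos
  have h2 := (tendsto_rpow_atTop hδ).eventually_gt_atTop (4*|C|+4)
  have h3 := (tendsto_rpow_atTop (by linarith : (0:ℝ) < 1 - δ)).eventually_ge_atTop 2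
  filter_upwards [h1, h2, h3, eventually_ge_atTop (3:ℝ)] with x hx1 hx2 hx3 hx4
  refine ⟨hx4, hx3, ?_⟩
  have hx0 : (0:ℝ) < x := by linarith
  have hx1' : |Real.log x| ≤ x ^ δ := by
    simpa [Real.norm_eq_abs, abs_of_nonneg (Real.rpow_nonneg hx0.le δ)] using hx1
  have hlog : Real.log x ≤ x ^ δ := (le_abs_self _).trans hx1'
  have hxδ1 : (1:ℝ) ≤ x ^ δ := Real.one_le_rpow (by linarith) hδ.le
  have hlog0 : 0 ≤ Real.log x := Real.log_nonneg (by linarith)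
  have hpow : x ^ (1 - 3*δ) * x ^ δ = x ^ (1 - 2*δ) := by
    rw [← Real.rpow_add hx0]; ring_nf
  have hpow2 : x ^ (1 - 2*δ) * x ^ δ = x ^ (1 - δ) := by
    rw [← Real.rpow_add hx0]; ring_nf
  have hp13 : (0:ℝ) < x ^ (1 - 3*δ) := Real.rpow_pos_of_pos hx0 _
  have hp12 : (0:ℝ) < x ^ (1 - 2*δ) := Real.rpow_pos_of_pos hx0 _
  have step1 : C * x ^ (1 - 3*δ) * (1 + Real.log x) ≤ |C| * x ^ (1 - 3*δ) * (2 * x ^ δ) := by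
    have hle : C * x ^ (1 - 3*δ) * (1 + Real.log x) ≤ |C| * x ^ (1 - 3*δ) * (1 + Real.log x) := by
      apply mul_le_mul_of_nonneg_right ?_ (by linarith)
      apply mul_le_mul_of_nonneg_right (le_abs_self C) hp13.le
    refine hle.trans ?_
    apply mul_le_mul_of_nonneg_left ?_ (by positivity)
    linarith
  have step2 : |C| * x ^ (1 - 3*δ) * (2 * x ^ δ) = 2 * |C| * x ^ (1 - 2*δ) := by
    rw [← hpow]; ring
  have step3 : 2 * |C| * x ^ (1 - 2*δ) < x ^ (1 - δ) / 2 := by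
    rw [← hpow2]
    have : (4*|C|+4) * x ^ (1 - 2*δ) < x ^ δ * x ^ (1 - 2*δ) := by
      apply mul_lt_mul_of_pos_right hx2 hp12
    nlinarith [abs_nonneg C]
  calc C * x ^ (1 - 3*δ) * (1 + Real.log x) ≤ 2 * |C| * x ^ (1 - 2*δ) := by
        rw [← step2]; exact step1
    _ < x ^ (1 - δ) / 2 := step3

theorem stmt_12 (δ C : ℝ) (hδ : 0 < δ) (hδ' : δ < 1 / 6) :
    ∃ P₀ : ℕ, ∀ (p n : ℕ) [Fact p.Prime], P₀ ≤ p → Odd n → n ∣ p - 1 →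
      (∀ a : (ZMod p)ˣ,
          ‖∑ h ∈ Finset.univ.filter (fun h : (ZMod p)ˣ => h ^ n = 1),
              e ((((a * h : (ZMod p)ˣ) : ZMod p).val : ℝ) / p)‖ ≤
            C * n / (p : ℝ) ^ (3 * δ)) →
      (∀ m : ZMod p, m ≠ 0 → (∃ y : ZMod p, y ^ n = m) →
          ∃ x : ℤ, 1 ≤ |x| ∧ (|x| : ℝ) ≤ (p : ℝ) ^ (1 - δ) ∧ ((x : ZMod p)) ^ n = m) ∧
        (kpn p n : ℝ) ≤ (p : ℝ) ^ (1 - δ) := by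
  obtain ⟨x₀, hx₀⟩ := eventually_atTop.mp (eventually_cond δ C hδ hδ')
  refine ⟨⌈x₀⌉₊ + 3, ?_⟩
  intro p n hpp hP hodd hdvd hbound
  have hxp : x₀ ≤ (p:ℝ) := by
    calc x₀ ≤ (⌈x₀⌉₊ : ℝ) := Nat.le_ceil x₀
      _ ≤ (p:ℝ) := by exact_mod_cast (by omega : ⌈x₀⌉₊ ≤ p)
  obtain ⟨hp3, hN2, hmain⟩ := hx₀ (p:ℝ) hxp
  have hp3' : 3 ≤ p := by exact_mod_cast hp3
  have hp0 : (0:ℝ) < p := by positivity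
  have hn : 0 < n := hodd.pos
  set N : ℝ := (p:ℝ) ^ (1 - δ) with hNdef
  set K : ℕ := ⌊N⌋₊ with hKdef
  have hKN : (K:ℝ) ≤ N := Nat.floor_le (by positivity)
  have hKg : N / 2 ≤ (K:ℝ) := by
    have := Nat.sub_one_lt_floor N
    linarith
  have hK1 : 1 ≤ K := by
    have : (1:ℝ) ≤ (K:ℝ) := by linarith
    exact_mod_cast this
  have hNp : N < (p:ℝ) := by
    rw [hNdef]
    calc (p:ℝ) ^ (1 - δ) < (p:ℝ) ^ (1:ℝ) := by
          apply Real.rpow_lt_rpow_of_exponent_lt (by exact_mod_cast (by omega : 1 < p))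
          linarith
      _ = (p:ℝ) := Real.rpow_one _
  have hKp : K < p := by
    have : (K:ℝ) < (p:ℝ) := lt_of_le_of_lt hKN hNp
    exact_mod_cast this
  -- the key existence statement via main_count
  have part1 : ∀ m : ZMod p, m ≠ 0 → (∃ y : ZMod p, y ^ n = m) →
      ∃ j : ℕ, j < K ∧ (((j+1 : ℕ) : ZMod p)) ^ n = m := by
    intro m hm hex
    apply main_count p n K hp3' hn hdvd m hm hex (C * n / (p : ℝ) ^ (3 * δ)) hbound
    have hrw : C * n / (p : ℝ) ^ (3 * δ) * ((p:ℝ) * (1 + Real.log p))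
        = (n:ℝ) * (C * (p:ℝ) ^ (1 - 3*δ) * (1 + Real.log p)) := by
      have h1 : (p:ℝ) ^ (1 - 3*δ) * (p:ℝ) ^ (3*δ) = (p:ℝ) := by
        rw [← Real.rpow_add hp0]
        norm_num
      have hne : (p:ℝ) ^ (3*δ) ≠ 0 := by positivity
      rw [div_mul_eq_mul_div, div_eq_iff hne]
      linear_combination ((n:ℝ) * C * (1 + Real.log p)) * h1.symm
    rw [hrw]
    calc (n:ℝ) * (C * (p:ℝ) ^ (1 - 3*δ) * (1 + Real.log p))
        < (n:ℝ) * (N / 2) := by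
          apply mul_lt_mul_of_pos_left hmain (by exact_mod_cast hn)
      _ ≤ (K:ℝ) * n := by
          have hn' : (0:ℝ) ≤ n := by positivity
          nlinarith
  have part1' : ∀ m : ZMod p, m ≠ 0 → (∃ y : ZMod p, y ^ n = m) →
      ∃ x : ℤ, 1 ≤ |x| ∧ (|x| : ℝ) ≤ (p : ℝ) ^ (1 - δ) ∧ ((x : ZMod p)) ^ n = m := by
    intro m hm hex
    obtain ⟨j, hjK, hj⟩ := part1 m hm hex
    refine ⟨(j:ℤ)+1, ?_, ?_, ?_⟩
    · rw [abs_of_nonneg (by positivity : (0:ℤ) ≤ (j:ℤ)+1)]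
      omega
    · push_cast
      rw [abs_of_nonneg (by positivity : (0:ℝ) ≤ (j:ℝ)+1)]
      have h2 : ((j:ℝ)+1) ≤ (K:ℝ) := by exact_mod_cast (by omega : j+1 ≤ K)
      calc (j:ℝ)+1 ≤ (K:ℝ) := h2
        _ ≤ N := hKN
        _ = (p:ℝ) ^ (1 - δ) := by rw [hNdef]
    · rw [show (((j:ℤ)+1 : ℤ) : ZMod p) = (((j+1:ℕ)) : ZMod p) by push_cast; ring]
      exact hj
  refine ⟨part1', ?_⟩
  -- covers p n K
  have hcov : covers p n K := by
    rw [covers]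
    ext a
    simp only [Set.mem_setOf_eq]
    constructor
    · rintro ⟨x, hx1, hx2, rfl⟩
      have hxne : ((x : ZMod p)) ≠ 0 := by
        rw [Ne, ZMod.intCast_zmod_eq_zero_iff_dvd]
        intro hdvd'
        have hxne0 : x ≠ 0 := by
          intro h; rw [h] at hx1; simp at hx1
        have habs : (p:ℤ) ≤ |x| := Int.le_of_dvd (abs_pos.mpr hxne0) ((dvd_abs _ _).mpr hdvd')
        have : (K:ℤ) < (p:ℤ) := by exact_mod_cast hKp
        omega
      exact ⟨pow_ne_zero n hxne, ⟨(x : ZMod p), rfl⟩⟩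
    · rintro ⟨ha, hy⟩
      obtain ⟨x, hx1, hx2, hx3⟩ := part1' a ha hy
      refine ⟨x, hx1, ?_, hx3⟩
      have hfl : N < (K:ℝ) + 1 := Nat.lt_floor_add_one N
      have hx2' : ((|x| : ℤ) : ℝ) ≤ N := by rw [hNdef]; exact_mod_cast hx2
      have hlt : ((|x| : ℤ) : ℝ) < ((K:ℤ) : ℝ) + 1 := lt_of_le_of_lt hx2' (by exact_mod_cast hfl)
      have : (|x| : ℤ) < (K:ℤ) + 1 := by exact_mod_cast hlt
      omega
  have hkpn : kpn p n ≤ K := Nat.sInf_le ⟨hK1, hcov⟩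
  calc (kpn p n : ℝ) ≤ (K:ℝ) := by exact_mod_cast hkpn
    _ ≤ N := hKN
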